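/- arXiv:1708.03980 — 6 statements merged into one kernel-verified Lean document; each statement's English description precedes it below -/
import Mathlib

section
/- If Q̃ ⊂ Q is compact and A_Q ⊂ Q̃, then A_Q = A_{Q̃}, i.e. the global relative attractor is unchanged when Q is replaced by any compact subset containing the attractor. -/
/-! For injective `f`, `A_Q` is backward invariant: if `f^[k] y ∈ A_Q` then `y ∈ A_Q ⊆ Q̃`.
Hence every point `f^[k] y` of `A_Q` lies in `f^[k] '' Q̃`. -/

open Set Function

namespace Function.Injective

variable {α : Type*} {f : α → α}

theorem preimage_iterate_iInter_image_iterate_subset (hf : Injective f) (T : Set α) (k : ℕ) :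
    f^[k] ⁻¹' (⋂ n : ℕ, f^[n] '' T) ⊆ ⋂ n : ℕ, f^[n] '' T := by
  intro y hy
  simp only [mem_preimage, mem_iInter] at hy ⊢
  intro n
  obtain ⟨z, hzT, hz⟩ := hy (k + n)
  rw [iterate_add_apply] at hz
  exact ⟨z, hzT, hf.iterate k hz⟩

theorem iInter_image_iterate_eq_of_subset (hf : Injective f) {S T : Set α} (hST : S ⊆ T)
    (hA : (⋂ k : ℕ, f^[k] '' T) ⊆ S) :
    (⋂ k : ℕ, f^[k] '' T) = ⋂ k : ℕ, f^[k] '' S := by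
  refine Subset.antisymm (fun x hx => mem_iInter.2 fun k => ?_)
    (iInter_mono fun k => image_mono hST)
  obtain ⟨y, -, rfl⟩ := mem_iInter.1 hx k
  exact ⟨y, hA (hf.preimage_iterate_iInter_image_iterate_subset T k hx), rfl⟩

end Function.Injective

theorem attractor_restrict_general (d : ℕ)
    (f : EuclideanSpace ℝ (Fin d) ≃ₜ EuclideanSpace ℝ (Fin d))
    (Q Qt : Set (EuclideanSpace ℝ (Fin d)))
    (hsub : Qt ⊆ Q)
    (hA : (⋂ k : ℕ, (⇑f)^[k] '' Q) ⊆ Qt) :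
    (⋂ k : ℕ, (⇑f)^[k] '' Q) = ⋂ k : ℕ, (⇑f)^[k] '' Qt :=
  f.injective.iInter_image_iterate_eq_of_subset hsub hA

/-- If `Q̃ ⊆ Q` is compact and `A_Q ⊆ Q̃`, then `A_Q = A_{Q̃}`. -/
theorem attractor_restrict (d : ℕ)
    (f : EuclideanSpace ℝ (Fin d) ≃ₜ EuclideanSpace ℝ (Fin d))
    (Q Qt : Set (EuclideanSpace ℝ (Fin d)))
    (hQ : IsCompact Q) (hQt : IsCompact Qt) (hsub : Qt ⊆ Q)
    (hA : (⋂ k : ℕ, (⇑f)^[k] '' Q) ⊆ Qt) :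
    (⋂ k : ℕ, (⇑f)^[k] '' Q) = ⋂ k : ℕ, (⇑f)^[k] '' Qt :=
  attractor_restrict_general d f Q Qt hsub hA
end

section
/- If Ω = {D_i : i ∈ I} is a ρ-cover of Q and the mapping φ : I → 2^I satisfies (f^{-1}(D_i) ∩ Q) ⊂ ⋃_{j∈φ(i)} D_j for all i ∈ I, then A_Q ⊂ A_Ω^φ, where A_Ω^φ := ⋃{D_i : i ∈ I, φ^k(i) ≠ ∅ for all k ∈ ℕ}. -/
/-- If `Ω = {D i}` is a `ρ`-cover of `Q` and `φ : I → 2^I` satisfies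
`f⁻¹(D i) ∩ Q ⊆ ⋃_{j ∈ φ i} D j` for all `i`, then `A_Q ⊆ A_Ω^φ`,
where `A_Ω^φ` is the union of those `D i` whose index survives all iterates of `φ`. -/
theorem attractor_subset_discrete (d : ℕ)
    (f : EuclideanSpace ℝ (Fin d) ≃ₜ EuclideanSpace ℝ (Fin d))
    (Q : Set (EuclideanSpace ℝ (Fin d))) (hQ : IsCompact Q)
    (I : Type) [Fintype I] (D : I → Set (EuclideanSpace ℝ (Fin d))) (ρ : ℝ)
    (hcov : Q = ⋃ i, D i) (hne : ∀ i, (D i).Nonempty)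
    (hdiam : ∀ i, Metric.diam (D i) ≤ ρ)
    (φ : I → Set I)
    (hφ : ∀ i, (⇑f.symm '' D i) ∩ Q ⊆ ⋃ j ∈ φ i, D j) :
    (⋂ k : ℕ, (⇑f)^[k] '' Q) ⊆
      ⋃ i ∈ {i : I | ∀ k : ℕ, ((fun S : Set I => ⋃ j ∈ S, φ j)^[k] {i}).Nonempty}, D i := by
  intro x hx
  have hxQ : ∀ k, (⇑f.symm)^[k] x ∈ Q := by
    intro k
    obtain ⟨y, hy, hyx⟩ := Set.mem_iInter.mp hx k
    have : (⇑f.symm)^[k] x = y := by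
      rw [← hyx]; exact (Function.LeftInverse.iterate f.symm_apply_apply k) y
    rwa [this]
  obtain ⟨i, hi⟩ := Set.mem_iUnion.mp (hcov ▸ hxQ 0)
  have key : ∀ k, ∃ j ∈ (fun S : Set I => ⋃ j ∈ S, φ j)^[k] {i},
      (⇑f.symm)^[k] x ∈ D j := by
    intro k
    induction k with
    | zero => exact ⟨i, rfl, hi⟩
    | succ k ih =>
      obtain ⟨j, hj, hjx⟩ := ih
      have hmem : (⇑f.symm) ((⇑f.symm)^[k] x) ∈ (⇑f.symm '' D j) ∩ Q :=
        ⟨⟨_, hjx, rfl⟩, by have h := hxQ (k+1); rwa [Function.iterate_succ_apply'] at h⟩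
      obtain ⟨l, hl, hlx⟩ := Set.mem_iUnion₂.mp (hφ j hmem)
      refine ⟨l, ?_, by rwa [Function.iterate_succ_apply']⟩
      rw [Function.iterate_succ_apply']
      exact Set.mem_iUnion₂.mpr ⟨j, hj, hl⟩
  refine Set.mem_iUnion₂.mpr ⟨i, fun k => ?_, hi⟩
  obtain ⟨j, hj, _⟩ := key k
  exact ⟨j, hj⟩
end

section
/- Suppose ρ_n → 0, each Ω_n = {D_i^n : i ∈ I_n} is a ρ_n-cover of Q, and the maps φ_n : I_n → 2^{I_n} satisfy sup_{i∈I_n} dist(⋃_{j∈φ_n(i)} D_j^n, f^{-1}(D_i^n)) → 0 as n → ∞. Then dist(A_{Ω_n}^{φ_n}, A_Q) → 0, i.e. the discrete global attractors converge to A_Q in the one-sided Hausdorff semidistance. -/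
/-!
A point of the discrete attractor lies in a cell `D i` with `i` alive, and since the index set is
finite, some successor `j ∈ φ i` is alive again. Choosing a point of `D j`, the hypothesis on `φ`
puts it near `f⁻¹(D i)`, so applying `f` (uniformly continuous near the compact set `fᴷ(Q)`)
shows by induction on `K` that the discrete attractors are eventually uniformly close to each
`fᴷ(Q)`. Compactness of `Q` upgrades closeness to finitely many `fᵏ(Q)` to closeness to their
intersection `A_Q`.
-/

open Filter Metric Set Topology

/-- One-sided Hausdorff semidistance `dist(X,Y) = sup_{x ∈ X} inf_{y ∈ Y} ‖x - y‖`. -/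
noncomputable def sdist {α : Type*} [PseudoMetricSpace α] (X Y : Set α) : ℝ :=
  ⨆ x ∈ X, Metric.infDist x Y

section sdist

variable {α : Type*} [PseudoMetricSpace α]

lemma sdist_nonneg (X Y : Set α) : 0 ≤ sdist X Y :=
  Real.iSup_nonneg fun _ => Real.iSup_nonneg fun _ => infDist_nonneg

lemma sdist_le {X Y : Set α} {c : ℝ} (hc : 0 ≤ c) (h : ∀ x ∈ X, infDist x Y ≤ c) :
    sdist X Y ≤ c :=
  Real.iSup_le (fun x => Real.iSup_le (h x) hc) hc

lemma infDist_le_sdist {X Y : Set α} {x : α} (hx : x ∈ X) (hX : Bornology.IsBounded X)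
    (hY : Y.Nonempty) : infDist x Y ≤ sdist X Y := by
  obtain ⟨y, hy⟩ := hY
  obtain ⟨r, hr⟩ := hX.subset_closedBall y
  have hbdd : BddAbove (range fun z => ⨆ _ : z ∈ X, infDist z Y) := by
    refine ⟨max r 0, forall_mem_range.2 fun z => Real.iSup_le (fun hz => ?_) (le_max_right _ _)⟩
    exact le_max_of_le_left ((infDist_le_dist_of_mem hy).trans (hr hz))
  exact (le_ciSup_of_le hbdd x (le_ciSup_of_le (by simp) hx le_rfl))

lemma exists_dist_lt_of_iSup_sdist_lt {ι : Type*} [Finite ι] {X Y : ι → Set α} {θ : ℝ}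
    (hX : ∀ i, Bornology.IsBounded (X i)) (hY : ∀ i, (Y i).Nonempty)
    (h : ⨆ i, sdist (X i) (Y i) < θ) {i : ι} {x : α} (hx : x ∈ X i) :
    ∃ y ∈ Y i, dist x y < θ :=
  (infDist_lt_iff (hY i)).1 <| ((infDist_le_sdist hx (hX i) (hY i)).trans
    (le_ciSup (f := fun i => sdist (X i) (Y i)) (Finite.bddAbove_range _) i)).trans_lt h

lemma tendsto_sdist_nhds_zero {ι : Type*} {l : Filter ι} {X Y : ι → Set α}
    (h : ∀ ε > 0, ∀ᶠ n in l, ∀ x ∈ X n, infDist x (Y n) < ε) :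
    Tendsto (fun n => sdist (X n) (Y n)) l (𝓝 0) := by
  refine Metric.tendsto_nhds.2 fun ε hε => (h (ε / 2) (half_pos hε)).mono fun n hn => ?_
  rw [Real.dist_0_eq_abs, abs_of_nonneg (sdist_nonneg _ _)]
  exact (sdist_le (half_pos hε).le fun x hx => (hn x hx).le).trans_lt (half_lt_self hε)

end sdist

section IndexDynamics

variable {I : Type*} (φ : I → Set I)

def succSet (S : Set I) : Set I := ⋃ j ∈ S, φ j

def aliveIndices : Set I := {i | ∀ k, ((succSet φ)^[k] {i}).Nonempty}

lemma iterate_succSet_eq_biUnion (k : ℕ) (S : Set I) :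
    (succSet φ)^[k] S = ⋃ j ∈ S, (succSet φ)^[k] {j} := by
  induction k generalizing S with
  | zero => simp
  | succ k ih =>
    simp_rw [Function.iterate_succ_apply, ih (succSet φ _)]
    simp [succSet]

lemma iterate_succSet_succ_singleton (k : ℕ) (i : I) :
    (succSet φ)^[k + 1] {i} = ⋃ j ∈ φ i, (succSet φ)^[k] {j} := by
  rw [Function.iterate_succ_apply, iterate_succSet_eq_biUnion]
  simp [succSet]

lemma nonempty_iterate_succSet_of_le {k m : ℕ} (hkm : k ≤ m) {S : Set I}
    (h : ((succSet φ)^[m] S).Nonempty) : ((succSet φ)^[k] S).Nonempty := by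
  rw [nonempty_iff_ne_empty] at h ⊢
  intro hk
  rw [← Nat.sub_add_cancel hkm, Function.iterate_add_apply, hk,
    Function.iterate_fixed (by simp [succSet])] at h
  exact h rfl

lemma exists_mem_aliveIndices_of_mem [Finite I] {i : I} (hi : i ∈ aliveIndices φ) :
    ∃ j ∈ φ i, j ∈ aliveIndices φ := by
  by_contra! h
  simp only [aliveIndices, mem_ofPred_eq, not_forall, not_nonempty_iff_eq_empty] at h
  choose! k hk using h
  obtain ⟨K, hK⟩ := (finite_range k).bddAbove
  obtain ⟨x, hx⟩ := hi (K + 1)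
  rw [iterate_succSet_succ_singleton] at hx
  obtain ⟨j, hj, hxj⟩ := mem_iUnion₂.1 hx
  have := nonempty_iterate_succSet_of_le φ (hK (mem_range_self j)) ⟨x, hxj⟩
  rw [hk j hj] at this
  exact not_nonempty_empty this

end IndexDynamics

def discreteAttractor {α I : Type*} (D : I → Set α) (φ : I → Set I) : Set α :=
  ⋃ i ∈ aliveIndices φ, D i

lemma discreteAttractor_subset {α I : Type*} {D : I → Set α} {Q : Set α} (hDQ : ∀ i, D i ⊆ Q)
    (φ : I → Set I) : discreteAttractor D φ ⊆ Q :=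
  iUnion₂_subset fun i _ => hDQ i

section Metric

variable {α β : Type*} [PseudoMetricSpace α] [PseudoMetricSpace β]

lemma IsCompact.exists_pos_forall_dist_lt {s : Set α} (hs : IsCompact s) {f : α → β}
    (hf : Continuous f) {ε : ℝ} (hε : 0 < ε) :
    ∃ θ > 0, ∀ p ∈ s, ∀ y, dist p y < θ → dist (f p) (f y) < ε := by
  obtain ⟨θ, hθ, h⟩ := Metric.mem_uniformity_dist.1 <|
    hs.uniformContinuousAt_of_continuousAt f (fun a _ => hf.continuousAt) (dist_mem_uniformity hε)
  exact ⟨θ, hθ, fun p hp y hpy => h hpy hp⟩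

lemma IsCompact.exists_forall_infDist_iInter_lt {Q : Set α} (hQ : IsCompact Q) {Z : ℕ → Set α}
    (hZ : ∀ k, IsClosed (Z k)) {ε : ℝ} (hε : 0 < ε) :
    ∃ m : ℕ, ∀ x ∈ Q, (∀ k ≤ m, infDist x (Z k) ≤ 1 / (m + 1)) →
      infDist x (⋂ k, Z k) < ε := by
  rcases (⋂ k, Z k).eq_empty_or_nonempty with hA | hA
  · exact ⟨0, fun x _ _ => by rwa [hA, infDist_empty]⟩
  set F : ℕ → Set α := fun m => {x | ∀ k ≤ m, infDist x (Z k) ≤ 1 / (m + 1)}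
  have hF_closed : ∀ m, IsClosed (F m) := fun m => by
    simp only [F, ofPred_forall]
    exact isClosed_iInter fun k => isClosed_iInter fun _ =>
      isClosed_le (continuous_infDist_pt _) continuous_const
  have hF_anti : Antitone F := fun m m' hmm' x hx k hk =>
    (hx k (hk.trans hmm')).trans (Nat.one_div_le_one_div hmm')
  have hF_inter : (Q ∩ {x | ε ≤ infDist x (⋂ k, Z k)}) ∩ ⋂ m, F m = ∅ := by
    refine eq_empty_of_forall_notMem fun x ⟨⟨_, hxε⟩, hxF⟩ => ?_
    have hxZ : x ∈ ⋂ k, Z k := mem_iInter.2 fun k => by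
      rw [(hZ k).mem_iff_infDist_zero (hA.mono (iInter_subset _ k))]
      refine le_antisymm (ge_of_tendsto tendsto_one_div_add_atTop_nhds_zero_nat ?_) infDist_nonneg
      exact (eventually_ge_atTop k).mono fun m hkm => mem_iInter.1 hxF m k hkm
    exact hε.not_ge (hxε.trans_eq (infDist_zero_of_mem hxZ))
  obtain ⟨m, hm⟩ := (hQ.inter_right (isClosed_le continuous_const (continuous_infDist_pt _)))
    |>.elim_directed_family_closed F hF_closed hF_inter hF_anti.directed_ge
  exact ⟨m, fun x hxQ hx => not_le.1 fun hxε => hm.subset ⟨⟨hxQ, hxε⟩, hx⟩⟩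

lemma eventually_forall_infDist_iInter_lt {ι : Type*} {l : Filter ι} {Q : Set α}
    (hQ : IsCompact Q) {Z : ℕ → Set α} (hZ : ∀ k, IsClosed (Z k)) {X : ι → Set α}
    (hXQ : ∀ n, X n ⊆ Q) (h : ∀ k, ∀ δ > 0, ∀ᶠ n in l, ∀ x ∈ X n, ∃ p ∈ Z k, dist x p < δ)
    {ε : ℝ} (hε : 0 < ε) : ∀ᶠ n in l, ∀ x ∈ X n, infDist x (⋂ k, Z k) < ε := by
  obtain ⟨m, hm⟩ := hQ.exists_forall_infDist_iInter_lt hZ hε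
  filter_upwards [(finite_le_nat m).eventually_all.2 fun k _ => h k _ Nat.one_div_pos_of_nat]
    with n hn x hx
  refine hm x (hXQ n hx) fun k hk => ?_
  obtain ⟨p, hp, hxp⟩ := hn k hk x hx
  exact (infDist_le_dist_of_mem hp).trans hxp.le

end Metric

section Attractor

variable {α : Type*} [PseudoMetricSpace α]

lemma exists_mem_image_dist_lt_of_mem_discreteAttractor {I : Type*} [Finite I] (f : α ≃ₜ α)
    {D : I → Set α} {φ : I → Set I} {S : Set α} {ρ θ ε : ℝ} (hne : ∀ i, (D i).Nonempty)
    (hD : ∀ i, Bornology.IsBounded (D i)) (hdiam : ∀ i, diam (D i) ≤ ρ)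
    (hfθ : ∀ p ∈ S, ∀ y, dist p y < θ → dist (f p) (f y) < ε)
    (hS : ∀ x ∈ discreteAttractor D φ, ∃ p ∈ S, dist x p < θ / 2)
    (hφ : ∀ i, ∀ x ∈ ⋃ j ∈ φ i, D j, ∃ y ∈ f.symm '' D i, dist x y < θ / 2)
    {x : α} (hx : x ∈ discreteAttractor D φ) : ∃ q ∈ f '' S, dist x q < ρ + ε := by
  obtain ⟨i, hi, hxi⟩ := mem_iUnion₂.1 hx
  obtain ⟨j, hji, hj⟩ := exists_mem_aliveIndices_of_mem φ hi
  obtain ⟨x₁, hx₁⟩ := hne j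
  obtain ⟨p, hpS, hx₁p⟩ := hS x₁ (mem_biUnion hj hx₁)
  obtain ⟨_, ⟨z, hz, rfl⟩, hx₁z⟩ := hφ i x₁ (mem_biUnion hji hx₁)
  have hpz : dist p (f.symm z) < θ := by
    linarith [dist_triangle_left p (f.symm z) x₁]
  have hfpz : dist (f p) z < ε := by simpa using hfθ p hpS _ hpz
  have hxz : dist x z ≤ ρ := (dist_le_diam_of_mem (hD i) hxi hz).trans (hdiam i)
  refine ⟨f p, mem_image_of_mem f hpS, ?_⟩
  linarith [dist_triangle_right x (f p) z]

lemma eventually_exists_mem_iterate_dist_lt {ι : Type*} {l : Filter ι} {I : ι → Type*}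
    [∀ n, Finite (I n)] (f : α ≃ₜ α) {Q : Set α} (hQ : IsCompact Q) {D : ∀ n, I n → Set α}
    {φ : ∀ n, I n → Set (I n)} {ρ : ι → ℝ} (hDQ : ∀ n i, D n i ⊆ Q)
    (hne : ∀ n i, (D n i).Nonempty) (hdiam : ∀ n i, diam (D n i) ≤ ρ n)
    (hρ : Tendsto ρ l (𝓝 0))
    (hφ : ∀ θ > 0, ∀ᶠ n in l, ∀ i, ∀ x ∈ ⋃ j ∈ φ n i, D n j,
      ∃ y ∈ f.symm '' D n i, dist x y < θ)
    (K : ℕ) {ε : ℝ} (hε : 0 < ε) :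
    ∀ᶠ n in l, ∀ x ∈ discreteAttractor (D n) (φ n), ∃ p ∈ f^[K] '' Q, dist x p < ε := by
  induction K generalizing ε with
  | zero =>
    refine Eventually.of_forall fun n x hx => ⟨x, ?_, by rwa [dist_self]⟩
    simpa using discreteAttractor_subset (hDQ n) (φ n) hx
  | succ K ih =>
    obtain ⟨θ, hθ, hfθ⟩ :=
      (hQ.image (f.continuous.iterate K)).exists_pos_forall_dist_lt f.continuous (half_pos hε)
    filter_upwards [ih (half_pos hθ), hφ _ (half_pos hθ),
      hρ.eventually (gt_mem_nhds (half_pos hε))] with n hK hφn hρn x hx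
    obtain ⟨q, hq, hxq⟩ := exists_mem_image_dist_lt_of_mem_discreteAttractor f (hne n)
      (fun i => hQ.isBounded.subset (hDQ n i)) (hdiam n) hfθ hK hφn hx
    refine ⟨q, by rwa [Function.iterate_succ', image_comp], by linarith⟩

end Attractor

/-- If `ρ n → 0`, the `Ω n` are `ρ n`-covers of `Q` and the discrete maps `φ n` satisfy
`sup_i dist(⋃_{j ∈ φ n i} D n j, f⁻¹(D n i)) → 0`, then the discrete global attractors
converge to `A_Q` in the one-sided Hausdorff semidistance. -/
theorem discrete_attractors_converge (d : ℕ)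
    (f : EuclideanSpace ℝ (Fin d) ≃ₜ EuclideanSpace ℝ (Fin d))
    (Q : Set (EuclideanSpace ℝ (Fin d))) (hQ : IsCompact Q)
    (I : ℕ → Type) [∀ n, Fintype (I n)]
    (D : ∀ n, I n → Set (EuclideanSpace ℝ (Fin d))) (ρ : ℕ → ℝ)
    (hρ : Tendsto ρ atTop (nhds 0))
    (hcov : ∀ n, Q = ⋃ i, D n i) (hne : ∀ n i, (D n i).Nonempty)
    (hdiam : ∀ n i, Metric.diam (D n i) ≤ ρ n)
    (φ : ∀ n, I n → Set (I n))
    (hφ : Tendsto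
      (fun n => ⨆ i : I n, sdist (⋃ j ∈ φ n i, D n j) (⇑f.symm '' D n i))
      atTop (nhds 0)) :
    Tendsto
      (fun n => sdist
        (⋃ i ∈ {i : I n | ∀ k : ℕ, ((fun S : Set (I n) => ⋃ j ∈ S, φ n j)^[k] {i}).Nonempty},
          D n i)
        (⋂ k : ℕ, (⇑f)^[k] '' Q))
      atTop (nhds 0) := by
  have hDQ : ∀ n i, D n i ⊆ Q := fun n i => hcov n ▸ subset_iUnion (D n) i
  have hφ' : ∀ θ > 0, ∀ᶠ n in atTop, ∀ i, ∀ x ∈ ⋃ j ∈ φ n i, D n j,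
      ∃ y ∈ f.symm '' D n i, dist x y < θ := fun θ hθ =>
    (hφ.eventually (gt_mem_nhds hθ)).mono fun n hn i x hx =>
      exists_dist_lt_of_iSup_sdist_lt
        (fun i => hQ.isBounded.subset (iUnion₂_subset fun j _ => hDQ n j))
        (fun i => (hne n i).image _) hn hx
  change Tendsto (fun n => sdist (discreteAttractor (D n) (φ n)) _) atTop _
  exact tendsto_sdist_nhds_zero fun ε hε =>
    eventually_forall_infDist_iInter_lt hQ (fun k => (hQ.image (f.continuous.iterate k)).isClosed)
      (fun n => discreteAttractor_subset (hDQ n) (φ n))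
      (fun k δ hδ => eventually_exists_mem_iterate_dist_lt f hQ hDQ hne hdiam hρ hφ' k hδ) hε
end

section
/- For a continuous flow φ and compact sets Q̃ ⊂ Q with A_Q ⊂ Q̃, it holds that A_Q = A_{Q̃}. -/
/-!
Points of `A_Q` can be flowed backwards without leaving `A_Q`: if `x ∈ φ (s + u) '' Q` for all
`u ≥ 0`, then `φ (-s) x ∈ φ u '' Q`. Hence every `x ∈ A_Q` is `φ t (φ (-t) x)` with
`φ (-t) x ∈ A_Q ⊆ Q̃`, giving `A_Q ⊆ A_{Q̃}`; the other inclusion is monotonicity in `Q`.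
-/

open Set

section Flow

variable {α : Type*} {φ : ℝ → α → α}

theorem flow_neg_apply_flow (hφ0 : ∀ x, φ 0 x = x) (hφadd : ∀ s t x, φ (s + t) x = φ s (φ t x))
    (t : ℝ) (x : α) : φ (-t) (φ t x) = x := by
  rw [← hφadd, neg_add_cancel, hφ0]

theorem flow_apply_flow_neg (hφ0 : ∀ x, φ 0 x = x) (hφadd : ∀ s t x, φ (s + t) x = φ s (φ t x))
    (t : ℝ) (x : α) : φ t (φ (-t) x) = x := by
  rw [← hφadd, add_neg_cancel, hφ0]

theorem flow_neg_mem_iInter_image (hφ0 : ∀ x, φ 0 x = x)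
    (hφadd : ∀ s t x, φ (s + t) x = φ s (φ t x)) {Q : Set α} {x : α}
    (hx : x ∈ ⋂ t ∈ Ici (0 : ℝ), φ t '' Q) {s : ℝ} (hs : 0 ≤ s) :
    φ (-s) x ∈ ⋂ t ∈ Ici (0 : ℝ), φ t '' Q := by
  simp only [mem_iInter, mem_Ici] at hx ⊢
  intro u hu
  obtain ⟨q, hq, rfl⟩ := hx (s + u) (add_nonneg hs hu)
  exact ⟨q, hq, by rw [hφadd, flow_neg_apply_flow hφ0 hφadd]⟩

theorem iInter_image_subset_iInter_image_of_subset (hφ0 : ∀ x, φ 0 x = x)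
    (hφadd : ∀ s t x, φ (s + t) x = φ s (φ t x)) {Q Qt : Set α}
    (hA : (⋂ t ∈ Ici (0 : ℝ), φ t '' Q) ⊆ Qt) :
    (⋂ t ∈ Ici (0 : ℝ), φ t '' Q) ⊆ ⋂ t ∈ Ici (0 : ℝ), φ t '' Qt := by
  intro x hx
  refine mem_iInter₂.2 fun t ht => ⟨φ (-t) x, ?_, flow_apply_flow_neg hφ0 hφadd t x⟩
  exact hA (flow_neg_mem_iInter_image hφ0 hφadd hx ht)

end Flow

theorem flow_attractor_restrict_general (d : ℕ)
    (φ : ℝ → EuclideanSpace ℝ (Fin d) → EuclideanSpace ℝ (Fin d))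
    (hφ0 : ∀ x, φ 0 x = x)
    (hφadd : ∀ s t x, φ (s + t) x = φ s (φ t x))
    (Q Qt : Set (EuclideanSpace ℝ (Fin d)))
    (hsub : Qt ⊆ Q)
    (hA : (⋂ t ∈ Set.Ici (0 : ℝ), φ t '' Q) ⊆ Qt) :
    (⋂ t ∈ Set.Ici (0 : ℝ), φ t '' Q) = ⋂ t ∈ Set.Ici (0 : ℝ), φ t '' Qt :=
  (iInter_image_subset_iInter_image_of_subset hφ0 hφadd hA).antisymm
    (iInter₂_mono fun _ _ => image_mono hsub)

/-- For a continuous flow `φ` and compact `Q̃ ⊆ Q` with `A_Q ⊆ Q̃`, we have `A_Q = A_{Q̃}`. -/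
theorem flow_attractor_restrict (d : ℕ)
    (φ : ℝ → EuclideanSpace ℝ (Fin d) → EuclideanSpace ℝ (Fin d))
    (hcont : Continuous fun p : ℝ × EuclideanSpace ℝ (Fin d) => φ p.1 p.2)
    (hφ0 : ∀ x, φ 0 x = x)
    (hφadd : ∀ s t x, φ (s + t) x = φ s (φ t x))
    (Q Qt : Set (EuclideanSpace ℝ (Fin d)))
    (hQ : IsCompact Q) (hQt : IsCompact Qt) (hsub : Qt ⊆ Q)
    (hA : (⋂ t ∈ Set.Ici (0 : ℝ), φ t '' Q) ⊆ Qt) :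
    (⋂ t ∈ Set.Ici (0 : ℝ), φ t '' Q) = ⋂ t ∈ Set.Ici (0 : ℝ), φ t '' Qt :=
  flow_attractor_restrict_general d φ hφ0 hφadd Q Qt hsub hA
end

section
/- If g is P-bounded and L-Lipschitz with flow φ, then the global error of N backward Euler steps with step size θ = h/N satisfies ‖φ(−h, x) − φ_E(−h, x)‖ ≤ (P h / (2N)) (e^{Lh} − 1) for all x ∈ ℝ^d. -/
/-!
Run the flow backwards, so that `s ↦ φ (-s)` is the forward flow of `-g` and the scheme is forward
Euler with step `θ = h / N`. One Euler step deviates from the exact flow by at most `L P θ² / 2`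
(the velocity changes by at most `L P s` after time `s`), and the time-`θ` flow is
`e^{Lθ}`-Lipschitz by Grönwall. Propagating the local errors along the exact flow gives
`e_{k+1} ≤ e^{Lθ} e_k + L P θ² / 2`, and since `L θ ≤ e^{Lθ} - 1` this recursion keeps
`e_k ≤ (P θ / 2) (e^{Lkθ} - 1)`.
-/

open Set Real NNReal

theorem dist_iterate_le_of_lipschitzWith {α : Type*} [PseudoMetricSpace α] {Φ F : α → α}
    {A : ℝ≥0} {B c : ℝ} (hΦ : LipschitzWith A Φ) (hF : ∀ y, dist (Φ y) (F y) ≤ B)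
    (hBc : B ≤ c * (A - 1)) (x : α) (k : ℕ) :
    dist (Φ^[k] x) (F^[k] x) ≤ c * (A ^ k - 1) := by
  induction k with
  | zero => simp
  | succ k ih =>
    rw [Function.iterate_succ_apply', Function.iterate_succ_apply']
    calc dist (Φ (Φ^[k] x)) (F (F^[k] x))
        ≤ dist (Φ (Φ^[k] x)) (Φ (F^[k] x)) + dist (Φ (F^[k] x)) (F (F^[k] x)) :=
          dist_triangle _ _ _
      _ ≤ A * (c * (A ^ k - 1)) + c * (A - 1) :=
          add_le_add ((hΦ.dist_le_mul _ _).trans (by gcongr)) ((hF _).trans hBc)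
      _ = c * (A ^ (k + 1) - 1) := by ring

theorem flow_natCast_mul_eq_iterate {α : Type*} {ψ : ℝ → α → α} (hψ0 : ∀ x, ψ 0 x = x)
    (hψadd : ∀ s t x, ψ (s + t) x = ψ s (ψ t x)) (t : ℝ) (x : α) (k : ℕ) :
    ψ (k * t) x = (ψ t)^[k] x := by
  induction k with
  | zero => simp [hψ0]
  | succ k ih => rw [Function.iterate_succ_apply', ← ih, ← hψadd]; push_cast; ring_nf

section Flow

variable {E : Type*} [NormedAddCommGroup E] [NormedSpace ℝ E] {f : E → E} {ψ : ℝ → E → E}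
  (hψ : ∀ t x, HasDerivAt (fun s => ψ s x) (f (ψ t x)) t)
include hψ

theorem norm_flow_sub_le (hψ0 : ∀ x, ψ 0 x = x) {P : ℝ} (hfP : ∀ x, ‖f x‖ ≤ P) {t : ℝ}
    (ht : 0 ≤ t) (x : E) : ‖ψ t x - x‖ ≤ P * t := by
  simpa [hψ0] using norm_image_sub_le_of_norm_deriv_le_segment'
    (fun s _ => (hψ s x).hasDerivWithinAt) (fun s _ => hfP _) t (right_mem_Icc.2 ht)

theorem lipschitzWith_flow (hψ0 : ∀ x, ψ 0 x = x) {K : ℝ≥0} (hf : LipschitzWith K f) {t : ℝ}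
    (ht : 0 ≤ t) : LipschitzWith (Real.toNNReal (exp (K * t))) (ψ t) := by
  refine LipschitzWith.of_dist_le' fun a b => ?_
  have hcont : ∀ x, ContinuousOn (fun s => ψ s x) (Icc 0 t) := fun x =>
    fun s _ => (hψ s x).continuousAt.continuousWithinAt
  simpa [hψ0, mul_comm] using dist_le_of_trajectories_ODE (v := fun _ => f) (fun _ => hf)
    (hcont a) (fun s _ => (hψ s a).hasDerivWithinAt) (hcont b)
    (fun s _ => (hψ s b).hasDerivWithinAt) (le_refl (dist (ψ 0 a) (ψ 0 b))) t
    (right_mem_Icc.2 ht)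

theorem norm_flow_sub_euler_le (hψ0 : ∀ x, ψ 0 x = x) {P : ℝ} (hfP : ∀ x, ‖f x‖ ≤ P)
    {K : ℝ≥0} (hf : LipschitzWith K f) {t : ℝ} (ht : 0 ≤ t) (x : E) :
    ‖ψ t x - (x + t • f x)‖ ≤ K * P * t ^ 2 / 2 := by
  have hderiv : ∀ s, HasDerivAt (fun s => ψ s x - (x + s • f x)) (f (ψ s x) - f x) s := fun s => by
    have := (hψ s x).sub (((hasDerivAt_id s).smul_const (f x)).const_add x)
    rwa [one_smul] at this
  have hbound : ∀ s ∈ Ico 0 t, ‖f (ψ s x) - f x‖ ≤ K * P * s := fun s hs =>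
    calc ‖f (ψ s x) - f x‖ ≤ K * ‖ψ s x - x‖ := hf.norm_sub_le _ _
      _ ≤ K * (P * s) := by gcongr; exact norm_flow_sub_le hψ hψ0 hfP hs.1 x
      _ = K * P * s := by ring
  have hB : ∀ s, HasDerivAt (fun s => K * P * s ^ 2 / 2) (K * P * s) s := fun s =>
    (((hasDerivAt_pow 2 s).const_mul (K * P : ℝ)).div_const 2).congr_deriv (by ring)
  exact image_norm_le_of_norm_deriv_right_le_deriv_boundary
    (fun s _ => (hderiv s).continuousAt.continuousWithinAt)
    (fun s _ => (hderiv s).hasDerivWithinAt) (by simp [hψ0]) hB hbound (right_mem_Icc.2 ht)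

theorem norm_flow_sub_euler_iterate_le (hψ0 : ∀ x, ψ 0 x = x)
    (hψadd : ∀ s t x, ψ (s + t) x = ψ s (ψ t x)) {P : ℝ} (hfP : ∀ x, ‖f x‖ ≤ P) {K : ℝ≥0}
    (hf : LipschitzWith K f) {t : ℝ} (ht : 0 ≤ t) {N : ℕ}
    (hN : 0 < N) (x : E) :
    ‖ψ t x - (fun y => y + (t / N) • f y)^[N] x‖ ≤ P * t / (2 * N) * (exp (K * t) - 1) := by
  set θ := t / N
  have hθ : 0 ≤ θ := by positivity
  have hNθ : N * θ = t := mul_div_cancel₀ t (Nat.cast_ne_zero.2 hN.ne')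
  have hP : 0 ≤ P := (norm_nonneg _).trans (hfP x)
  have hexp : (Real.toNNReal (exp (K * θ)) : ℝ) = exp (K * θ) := coe_toNNReal _ (exp_pos _).le
  have hlocal : K * P * θ ^ 2 / 2 ≤ P * θ / 2 * (Real.toNNReal (exp (K * θ)) - 1) :=
    calc K * P * θ ^ 2 / 2 = P * θ / 2 * (K * θ) := by ring
      _ ≤ P * θ / 2 * (Real.toNNReal (exp (K * θ)) - 1) := by
        rw [hexp]; gcongr; linarith [add_one_le_exp (K * θ)]
  have := dist_iterate_le_of_lipschitzWith (lipschitzWith_flow hψ hψ0 hf hθ)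
    (fun y => (dist_eq_norm _ _).trans_le (norm_flow_sub_euler_le hψ hψ0 hfP hf hθ y)) hlocal x N
  rw [← dist_eq_norm, ← hNθ, flow_natCast_mul_eq_iterate hψ0 hψadd]
  refine this.trans_eq ?_
  rw [hexp, ← exp_nat_mul]
  field_simp

end Flow

/-- If `g` is `P`-bounded and `L`-Lipschitz with flow `φ`, the global error of `N`
backward Euler steps of size `θ = h/N` satisfies
`‖φ(-h, x) - φ_E(-h, x)‖ ≤ (P h / (2N)) (e^{Lh} - 1)`. -/
theorem euler_global_error (d : ℕ)
    (g : EuclideanSpace ℝ (Fin d) → EuclideanSpace ℝ (Fin d))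
    (φ : ℝ → EuclideanSpace ℝ (Fin d) → EuclideanSpace ℝ (Fin d))
    (P L : ℝ) (hP : ∀ x, ‖g x‖ ≤ P) (hL : 0 ≤ L)
    (hg : ∀ x y, ‖g x - g y‖ ≤ L * ‖x - y‖)
    (hφ0 : ∀ x, φ 0 x = x)
    (hφadd : ∀ s t x, φ (s + t) x = φ s (φ t x))
    (hderiv : ∀ (t : ℝ) (x : EuclideanSpace ℝ (Fin d)),
      HasDerivAt (fun s => φ s x) (g (φ t x)) t)
    (h : ℝ) (hh : 0 < h) (N : ℕ) (hN : 0 < N) :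
    ∀ x : EuclideanSpace ℝ (Fin d),
      ‖φ (-h) x - (fun y => y - (h / N) • g y)^[N] x‖
        ≤ (P * h / (2 * N)) * (Real.exp (L * h) - 1) := by
  intro x
  have hbackward : ∀ t x, HasDerivAt (fun s => φ (-s) x) ((-g) (φ (-t) x)) t := fun t x => by
    simpa [Function.comp_def] using (hderiv (-t) x).scomp t (hasDerivAt_neg t)
  have hgL : LipschitzWith L.toNNReal g :=
    LipschitzWith.of_dist_le' fun x y => by simpa only [dist_eq_norm] using hg x y
  have := norm_flow_sub_euler_iterate_le hbackward (by simpa using hφ0)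
    (fun s t x => by rw [neg_add]; exact hφadd (-s) (-t) x) (by simpa using hP) hgL.neg
    hh.le hN x
  simpa [coe_toNNReal L hL, sub_eq_add_neg] using this
end

section
/- If g is P-bounded and L-Lipschitz, then k steps of the explicit Euler scheme with step size θ satisfy ‖(kθ)^{-1}(φ_E(−kθ, x) − x) + g(x)‖ ≤ (1/2) L P k θ for all x ∈ ℝ^d and k ≥ 1. -/
/-- If `g` is `P`-bounded and `L`-Lipschitz, then `k ≥ 1` Euler steps of size `θ` satisfy
`‖(kθ)⁻¹ (φ_E(-kθ, x) - x) + g x‖ ≤ (1/2) L P k θ`. -/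
theorem euler_difference_quotient_bound (d : ℕ)
    (g : EuclideanSpace ℝ (Fin d) → EuclideanSpace ℝ (Fin d))
    (P L θ : ℝ) (hP : ∀ x, ‖g x‖ ≤ P) (hL : 0 ≤ L) (hθ : 0 < θ)
    (hg : ∀ x y, ‖g x - g y‖ ≤ L * ‖x - y‖) :
    ∀ (k : ℕ), 1 ≤ k → ∀ x : EuclideanSpace ℝ (Fin d),
      ‖((k : ℝ) * θ)⁻¹ • ((fun y => y - θ • g y)^[k] x - x) + g x‖
        ≤ (1 / 2) * L * P * k * θ := by
  intro k hk x
  set f : EuclideanSpace ℝ (Fin d) → EuclideanSpace ℝ (Fin d) :=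
    fun y => y - θ • g y with hf
  have hP0 : 0 ≤ P := le_trans (norm_nonneg _) (hP x)
  -- growth bound
  have hgrow : ∀ j : ℕ, ‖f^[j] x - x‖ ≤ j * θ * P := by
    intro j
    induction j with
    | zero => simp
    | succ n ih =>
      rw [Function.iterate_succ_apply']
      have : f (f^[n] x) - x = (f^[n] x - x) - θ • g (f^[n] x) := by
        simp [hf]; abel
      rw [this]
      calc ‖(f^[n] x - x) - θ • g (f^[n] x)‖
          ≤ ‖f^[n] x - x‖ + ‖θ • g (f^[n] x)‖ := norm_sub_le _ _
        _ ≤ n * θ * P + θ * P := by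
            rw [norm_smul, Real.norm_eq_abs, abs_of_pos hθ]
            exact add_le_add ih (mul_le_mul_of_nonneg_left (hP _) hθ.le)
        _ = (n + 1 : ℕ) * θ * P := by push_cast; ring
  -- sum formula
  have hsum : ∀ m : ℕ, f^[m] x - x = -θ • ∑ j ∈ Finset.range m, g (f^[j] x) := by
    intro m
    induction m with
    | zero => simp
    | succ n ih =>
      rw [Function.iterate_succ_apply', Finset.sum_range_succ]
      have : f (f^[n] x) - x = (f^[n] x - x) - θ • g (f^[n] x) := by
        simp [hf]; abel
      rw [this, ih, smul_add]
      module
  have hk0 : (0:ℝ) < (k : ℝ) := by exact_mod_cast Nat.lt_of_lt_of_le Nat.zero_lt_one hk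
  have hkθpos : (0:ℝ) < (k:ℝ) * θ := by positivity
  have hkθ : ((k:ℝ) * θ) ≠ 0 := ne_of_gt hkθpos
  -- rewrite the expression
  have hrw : ((k : ℝ) * θ)⁻¹ • (f^[k] x - x) + g x
      = ((k : ℝ) * θ)⁻¹ • ∑ j ∈ Finset.range k, θ • (g x - g (f^[j] x)) := by
    rw [hsum k]
    have h1 : ∑ j ∈ Finset.range k, θ • (g x - g (f^[j] x))
        = ((k:ℝ) * θ) • g x - θ • ∑ j ∈ Finset.range k, g (f^[j] x) := by
      simp only [smul_sub, Finset.sum_sub_distrib, Finset.sum_const, Finset.card_range,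
        ← Finset.smul_sum]
      congr 1
      rw [← Nat.cast_smul_eq_nsmul ℝ, smul_smul]
    rw [h1, smul_sub, smul_smul, smul_smul, inv_mul_cancel₀ hkθ, one_smul]
    module
  rw [hrw]
  have hbound : ‖∑ j ∈ Finset.range k, θ • (g x - g (f^[j] x))‖
      ≤ ∑ j ∈ Finset.range k, θ * (L * ((j:ℝ) * θ * P)) := by
    refine le_trans (norm_sum_le _ _) (Finset.sum_le_sum fun j _ => ?_)
    rw [norm_smul, Real.norm_eq_abs, abs_of_pos hθ]
    have h := hg x (f^[j] x)
    rw [norm_sub_rev x] at h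
    exact mul_le_mul_of_nonneg_left
      (le_trans h (mul_le_mul_of_nonneg_left (hgrow j) hL)) hθ.le
  have hgauss : ∀ m : ℕ, ∑ j ∈ Finset.range m, (j:ℝ) = (m:ℝ) * ((m:ℝ) - 1) / 2 := by
    intro m
    induction m with
    | zero => simp
    | succ n ih =>
      rw [Finset.sum_range_succ, ih]
      push_cast; ring
  have hsum2 : ∑ j ∈ Finset.range k, θ * (L * ((j:ℝ) * θ * P))
      = θ * L * θ * P * ((k:ℝ) * ((k:ℝ) - 1) / 2) := by
    calc ∑ j ∈ Finset.range k, θ * (L * ((j:ℝ) * θ * P))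
        = ∑ j ∈ Finset.range k, (θ * L * θ * P) * (j:ℝ) := by
          apply Finset.sum_congr rfl; intros; ring
      _ = θ * L * θ * P * ((k:ℝ) * ((k:ℝ) - 1) / 2) := by
          rw [← Finset.mul_sum, hgauss k]
  rw [norm_smul, Real.norm_eq_abs, abs_of_pos (inv_pos.mpr hkθpos)]
  calc ((k:ℝ) * θ)⁻¹ * ‖∑ j ∈ Finset.range k, θ • (g x - g (f^[j] x))‖
      ≤ ((k:ℝ) * θ)⁻¹ * (θ * L * θ * P * ((k:ℝ) * ((k:ℝ)-1) / 2)) := by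
        rw [← hsum2]
        exact mul_le_mul_of_nonneg_left hbound (by positivity)
    _ = (1/2) * L * P * ((k:ℝ)-1) * θ := by
        field_simp
    _ ≤ (1/2) * L * P * k * θ := by
        nlinarith [mul_nonneg (mul_nonneg (mul_nonneg (by norm_num : (0:ℝ) ≤ 1/2) hL) hP0) hθ.le]
end
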